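/- In every reachability game augmented with persistent live groups 𝔊 = (G, ◇T, ψ_pers(Λ)), Player 0 has a single positional (memoryless) strategy that is winning from every vertex of her winning region in 𝔊. -/
import Mathlib


universe u

/-- A two-player game graph: finite-intended vertex set `V`, an ownership function
(`owner v = 0` means `v` is a Player-0 vertex, `owner v = 1` a Player-1 vertex),
and an edge relation such that every vertex has at least one outgoing edge. -/
structure GameGraph (V : Type u) where
  owner : V → Fin 2
  E : V → V → Prop
  exists_succ : ∀ v, ∃ w, E v w

variable {V : Type u}

/-- A play of the game graph: an infinite sequence of vertices following edges. -/
def IsPlay (G : GameGraph V) (ρ : ℕ → V) : Prop :=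
  ∀ k, G.E (ρ k) (ρ (k + 1))

/-- A (history-dependent) strategy: given the list of previously visited
vertices and the current vertex, it chooses a next vertex. -/
abbrev Strategy (V : Type u) := List V → V → V

/-- A strategy of Player `i` is valid if at each Player-`i` vertex it chooses
an edge of the game graph. -/
def StratValid (G : GameGraph V) (i : Fin 2) (σ : Strategy V) : Prop :=
  ∀ (h : List V) (v : V), G.owner v = i → G.E v (σ h v)

/-- A positional (memoryless) strategy ignores the history. -/
def Positional (σ : Strategy V) : Prop :=
  ∀ (h h' : List V) (v : V), σ h v = σ h' v

/-- A play is compliant with the strategy `σ` of Player `i` (a `σ`-play) if at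
every Player-`i` vertex it moves to the vertex chosen by `σ`. -/
def Compliant (G : GameGraph V) (i : Fin 2) (σ : Strategy V) (ρ : ℕ → V) : Prop :=
  ∀ k, G.owner (ρ k) = i → ρ (k + 1) = σ (List.ofFn fun j : Fin k => ρ j.val) (ρ k)

/-- `σ` is a winning strategy for Player `i` from `v`, where `W` is the set of
plays that are winning for Player `i`. -/
def WinsFrom (G : GameGraph V) (i : Fin 2) (W : Set (ℕ → V)) (σ : Strategy V) (v : V) : Prop :=
  StratValid G i σ ∧
    ∀ ρ : ℕ → V, IsPlay G ρ → Compliant G i σ ρ → ρ 0 = v → ρ ∈ W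

/-- The winning region of Player `i`: the vertices from which Player `i` has a
winning strategy. -/
def WinRegion (G : GameGraph V) (i : Fin 2) (W : Set (ℕ → V)) : Set V :=
  {v | ∃ σ, WinsFrom G i W σ v}

/-- A vertex occurs infinitely often along a play. -/
def InfOft (ρ : ℕ → V) (v : V) : Prop := ∀ n, ∃ k, n ≤ k ∧ ρ k = v

/-- An edge is taken infinitely often along a play. -/
def EdgeInfOft (ρ : ℕ → V) (e : V × V) : Prop :=
  ∀ n, ∃ k, n ≤ k ∧ ρ k = e.1 ∧ ρ (k + 1) = e.2

/-- Parity objective: the maximal priority occurring infinitely often is even. -/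
def ParityWin (P : V → ℕ) (ρ : ℕ → V) : Prop :=
  ∃ v, InfOft ρ v ∧ Even (P v) ∧ ∀ w, InfOft ρ w → P w ≤ P v

/-- The set of source vertices of a set of edges. -/
def srcSet (H : Set (V × V)) : Set V := {u | ∃ w, (u, w) ∈ H}

/-- A persistent live group: a triple `(S, C, R)` of a source region `S`, a set
`C` of (Player-0-sourced) edges, and a target region `R ⊆ S`. -/
abbrev PersGroup (V : Type u) := Set V × Set (V × V) × Set V

/-- Well-formedness of a persistent live group `(S, C, R)` over `G`:
`R ⊆ S ⊆ V` and `C ⊆ E` consists of edges with Player-0 sources. -/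
def persWF (G : GameGraph V) (g : PersGroup V) : Prop :=
  g.2.2 ⊆ g.1 ∧ ∀ e ∈ g.2.1, G.E e.1 e.2 ∧ G.owner e.1 = 0

/-- A play satisfies `ψ_pers(S, C, R)` iff for every position `n`: if from `n`
on the play stays in `S` and always takes an edge of `C` whenever it is at a
source of `C`, then the play visits `R` at some position `≥ n`. -/
def psiPersOne (S : Set V) (C : Set (V × V)) (R : Set V) (ρ : ℕ → V) : Prop :=
  ∀ n : ℕ,
    (∀ m2, n ≤ m2 → ρ m2 ∈ S ∧ (ρ m2 ∈ srcSet C → (ρ m2, ρ (m2 + 1)) ∈ C)) →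
      ∃ m2, n ≤ m2 ∧ ρ m2 ∈ R

/-- The assumption `ψ_pers(Λ)` induced by a set `Λ` of persistent live groups. -/
def psiPers (Λ : Set (PersGroup V)) (ρ : ℕ → V) : Prop :=
  ∀ g ∈ Λ, psiPersOne g.1 g.2.1 g.2.2 ρ

namespace Stmt16
set_option linter.unusedSectionVars false
open Classical

variable {V : Type} [Fintype V]

noncomputable def anySucc (G : GameGraph V) (v : V) : V := (G.exists_succ v).choose

lemma anySucc_edge (G : GameGraph V) (v : V) : G.E v (anySucc G v) :=
  (G.exists_succ v).choose_spec

/-- Controlled predecessors. -/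
def Cpre (G : GameGraph V) (Y : Set V) : Set V :=
  {v | (G.owner v = 0 ∧ ∃ w, G.E v w ∧ w ∈ Y) ∨ (G.owner v ≠ 0 ∧ ∀ w, G.E v w → w ∈ Y)}

/-- Closure property of a "violation region" `Z` for group `g`, relative to
an already-winning set `Y`. -/
def ZProp (G : GameGraph V) (g : PersGroup V) (Y Z : Set V) : Prop :=
  Z ⊆ g.1 \ g.2.2 ∧ ∀ v ∈ Z,
    (G.owner v ≠ 0 → ∀ w, G.E v w → w ∈ Z ∪ Y) ∧
    (G.owner v = 0 →
      (v ∈ srcSet g.2.1 → ∃ w, (v, w) ∈ g.2.1 ∧ w ∈ Z ∪ Y) ∧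
      (v ∉ srcSet g.2.1 → ∃ w, G.E v w ∧ w ∈ Z ∪ Y))

/-- The largest violation region. -/
def Zg (G : GameGraph V) (g : PersGroup V) (Y : Set V) : Set V := ⋃₀ {Z | ZProp G g Y Z}

lemma ZProp_Zg (G : GameGraph V) (g : PersGroup V) (Y : Set V) : ZProp G g Y (Zg G g Y) := by
  constructor
  · rintro v ⟨Z, hZ, hv⟩
    exact hZ.1 hv
  · rintro v ⟨Z, hZ, hv⟩
    have h := hZ.2 v hv
    have hsub : Z ∪ Y ⊆ Zg G g Y ∪ Y := by
      apply Set.union_subset_union_left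
      exact fun x hx => ⟨Z, hZ, hx⟩
    refine ⟨fun ho w hw => hsub (h.1 ho w hw), fun ho => ?_⟩
    refine ⟨fun hs => ?_, fun hs => ?_⟩
    · obtain ⟨w, hw1, hw2⟩ := (h.2 ho).1 hs
      exact ⟨w, hw1, hsub hw2⟩
    · obtain ⟨w, hw1, hw2⟩ := (h.2 ho).2 hs
      exact ⟨w, hw1, hsub hw2⟩

lemma ZProp_mono (G : GameGraph V) (g : PersGroup V) {Y Y' Z : Set V} (hY : Y ⊆ Y')
    (h : ZProp G g Y Z) : ZProp G g Y' Z := by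
  have hsub : Z ∪ Y ⊆ Z ∪ Y' := Set.union_subset_union_right _ hY
  refine ⟨h.1, fun v hv => ?_⟩
  have hh := h.2 v hv
  refine ⟨fun ho w hw => hsub (hh.1 ho w hw), fun ho => ⟨fun hs => ?_, fun hs => ?_⟩⟩
  · obtain ⟨w, hw1, hw2⟩ := (hh.2 ho).1 hs; exact ⟨w, hw1, hsub hw2⟩
  · obtain ⟨w, hw1, hw2⟩ := (hh.2 ho).2 hs; exact ⟨w, hw1, hsub hw2⟩

lemma Zg_mono (G : GameGraph V) (g : PersGroup V) {Y Y' : Set V} (hY : Y ⊆ Y') :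
    Zg G g Y ⊆ Zg G g Y' := by
  rintro v ⟨Z, hZ, hv⟩
  exact ⟨Z, ZProp_mono G g hY hZ, hv⟩

/-- One step of the fixpoint computation of the winning region. -/
def Fop (G : GameGraph V) (T : Set V) (Λ : Set (PersGroup V)) (Y : Set V) : Set V :=
  T ∪ Cpre G Y ∪ ⋃ g ∈ Λ, Zg G g Y

lemma Cpre_mono (G : GameGraph V) {Y Y' : Set V} (hY : Y ⊆ Y') : Cpre G Y ⊆ Cpre G Y' := by
  rintro v (⟨ho, w, hw1, hw2⟩ | ⟨ho, hall⟩)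
  · exact Or.inl ⟨ho, w, hw1, hY hw2⟩
  · exact Or.inr ⟨ho, fun w hw => hY (hall w hw)⟩

lemma Fop_mono (G : GameGraph V) (T : Set V) (Λ : Set (PersGroup V)) :
    Monotone (Fop G T Λ) := by
  intro Y Y' hY
  apply Set.union_subset_union
  · exact Set.union_subset_union subset_rfl (Cpre_mono G hY)
  · exact Set.iUnion₂_mono fun g hg => Zg_mono G g hY

/-- Iterates of the fixpoint operator. -/
def Xit (G : GameGraph V) (T : Set V) (Λ : Set (PersGroup V)) (n : ℕ) : Set V :=
  (Fop G T Λ)^[n] ∅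

lemma Xit_zero (G : GameGraph V) (T : Set V) (Λ : Set (PersGroup V)) : Xit G T Λ 0 = ∅ := rfl

lemma Xit_succ (G : GameGraph V) (T : Set V) (Λ : Set (PersGroup V)) (n : ℕ) :
    Xit G T Λ (n + 1) = Fop G T Λ (Xit G T Λ n) := Function.iterate_succ_apply' _ _ _

lemma Xit_mono_step (G : GameGraph V) (T : Set V) (Λ : Set (PersGroup V)) (n : ℕ) :
    Xit G T Λ n ⊆ Xit G T Λ (n + 1) := by
  induction n with
  | zero => simp [Xit_zero]
  | succ m ih =>
      rw [Xit_succ, Xit_succ]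
      exact Fop_mono G T Λ ih

lemma Xit_mono (G : GameGraph V) (T : Set V) (Λ : Set (PersGroup V)) {n m : ℕ} (h : n ≤ m) :
    Xit G T Λ n ⊆ Xit G T Λ m := by
  induction m with
  | zero => simp_all
  | succ k ih =>
      rcases Nat.lt_or_ge n (k+1) with h' | h'
      · exact (ih (Nat.lt_succ_iff.mp h')).trans (Xit_mono_step G T Λ k)
      · have : n = k + 1 := le_antisymm h h'
        simp [this]

lemma exists_fix (G : GameGraph V) (T : Set V) (Λ : Set (PersGroup V)) :
    ∃ N, Xit G T Λ (N + 1) = Xit G T Λ N := by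
  by_contra h
  push_neg at h
  have hs : StrictMono fun n => (Xit G T Λ n).ncard := by
    apply strictMono_nat_of_lt_succ
    intro n
    refine Set.ncard_lt_ncard ?_ (Set.toFinite _)
    exact (Set.ssubset_iff_of_subset (Xit_mono_step G T Λ n)).mpr <| by
      by_contra hc
      push_neg at hc
      exact h n (le_antisymm (fun x hx => hc x hx) (Xit_mono_step G T Λ n))
  have h1 : ∀ n, n ≤ (Xit G T Λ n).ncard := fun n => hs.le_apply
  have h2 := h1 (Fintype.card V + 1)
  have h3 : (Xit G T Λ (Fintype.card V + 1)).ncard ≤ Fintype.card V := by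
    have := Set.ncard_le_ncard (Set.subset_univ (Xit G T Λ (Fintype.card V + 1))) (Set.toFinite _)
    simpa [Set.ncard_univ] using this
  omega

/-- The winning-region fixpoint. -/
noncomputable def Xw (G : GameGraph V) (T : Set V) (Λ : Set (PersGroup V)) : Set V :=
  Xit G T Λ (exists_fix G T Λ).choose

lemma Xw_fixed (G : GameGraph V) (T : Set V) (Λ : Set (PersGroup V)) :
    Fop G T Λ (Xw G T Λ) = Xw G T Λ := by
  have := (exists_fix G T Λ).choose_spec
  rw [Xw, ← Xit_succ]
  exact this

lemma Xit_le_Xw (G : GameGraph V) (T : Set V) (Λ : Set (PersGroup V)) (n : ℕ) :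
    Xit G T Λ n ⊆ Xw G T Λ := by
  set N := (exists_fix G T Λ).choose with hN
  have hstab : ∀ m, Xit G T Λ (N + m) = Xit G T Λ N := by
    intro m
    induction m with
    | zero => rfl
    | succ k ih =>
        have : N + (k+1) = (N + k) + 1 := rfl
        rw [this, Xit_succ, ih, ← Xit_succ]
        exact (exists_fix G T Λ).choose_spec
  rcases Nat.le_total n N with h | h
  · exact Xit_mono G T Λ h
  · have : Xit G T Λ n = Xit G T Λ N := by
      have := hstab (n - N)
      rwa [Nat.add_sub_cancel' h] at this
    rw [Xw, ← hN, ← this]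

lemma Xw_mem_iff (G : GameGraph V) (T : Set V) (Λ : Set (PersGroup V)) (v : V) :
    v ∈ Xw G T Λ ↔ ∃ n, v ∈ Xit G T Λ n := by
  constructor
  · intro h; exact ⟨_, h⟩
  · rintro ⟨n, hn⟩; exact Xit_le_Xw G T Λ n hn

end Stmt16
namespace Stmt16
set_option linter.unusedSectionVars false
open Classical

variable {V : Type} [Fintype V]

noncomputable def LL (Λ : Set (PersGroup V)) : List (PersGroup V) :=
  (Set.toFinite Λ).toFinset.toList

lemma mem_LL {Λ : Set (PersGroup V)} {g : PersGroup V} : g ∈ LL Λ ↔ g ∈ Λ := by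
  simp [LL, Set.Finite.mem_toFinset]

noncomputable def Lget (Λ : Set (PersGroup V)) (i : ℕ) : PersGroup V :=
  (LL Λ).getD i (∅, ∅, ∅)

lemma Lget_mem {Λ : Set (PersGroup V)} {i : ℕ} (hi : i < (LL Λ).length) : Lget Λ i ∈ Λ := by
  rw [← mem_LL (Λ := Λ), Lget, List.getD_eq_getElem _ _ hi]
  exact List.getElem_mem hi

lemma exists_index {Λ : Set (PersGroup V)} {g : PersGroup V} (hg : g ∈ Λ) :
    ∃ i, i < (LL Λ).length ∧ Lget Λ i = g := by
  obtain ⟨i, hi, he⟩ := List.mem_iff_getElem.mp (mem_LL.mpr hg)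
  exact ⟨i, hi, by rw [Lget, List.getD_eq_getElem _ _ hi, he]⟩

/-- Rank of a vertex in the fixpoint iteration. -/
noncomputable def rk (G : GameGraph V) (T : Set V) (Λ : Set (PersGroup V)) (v : V) : ℕ :=
  if h : ∃ n, v ∈ Xit G T Λ n then Nat.find h else 0

lemma rk_mem {G : GameGraph V} {T : Set V} {Λ : Set (PersGroup V)} {v : V}
    (hx : ∃ n, v ∈ Xit G T Λ n) : v ∈ Xit G T Λ (rk G T Λ v) := by
  rw [rk, dif_pos hx]; exact Nat.find_spec hx

lemma rk_pos {G : GameGraph V} {T : Set V} {Λ : Set (PersGroup V)} {v : V}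
    (hx : ∃ n, v ∈ Xit G T Λ n) : 1 ≤ rk G T Λ v := by
  rw [rk, dif_pos hx]
  rcases Nat.eq_zero_or_pos (Nat.find hx) with h | h
  · have := Nat.find_spec hx; rw [h] at this; simp [Xit_zero] at this
  · exact h

lemma rk_notMem_pred {G : GameGraph V} {T : Set V} {Λ : Set (PersGroup V)} {v : V}
    (hx : ∃ n, v ∈ Xit G T Λ n) : v ∉ Xit G T Λ (rk G T Λ v - 1) := by
  have h1 := rk_pos hx
  rw [rk, dif_pos hx] at h1 ⊢
  exact Nat.find_min hx (by omega)

lemma rk_le {G : GameGraph V} {T : Set V} {Λ : Set (PersGroup V)} {v : V} {n : ℕ}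
    (hn : v ∈ Xit G T Λ n) : rk G T Λ v ≤ n := by
  rw [rk, dif_pos ⟨n, hn⟩]; exact Nat.find_min' _ hn

/-- Member of some enumerated violation region. -/
def Pz (G : GameGraph V) (Λ : Set (PersGroup V)) (Y : Set V) (v : V) : Prop :=
  ∃ i, i < (LL Λ).length ∧ v ∈ Zg G (Lget Λ i) Y

noncomputable def gidx (G : GameGraph V) (Λ : Set (PersGroup V)) (Y : Set V) (v : V) : ℕ :=
  if h : Pz G Λ Y v then Nat.find h else 0

lemma gidx_spec {G : GameGraph V} {Λ : Set (PersGroup V)} {Y : Set V} {v : V}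
    (h : Pz G Λ Y v) :
    gidx G Λ Y v < (LL Λ).length ∧ v ∈ Zg G (Lget Λ (gidx G Λ Y v)) Y := by
  rw [gidx, dif_pos h]; exact Nat.find_spec h

lemma gidx_le {G : GameGraph V} {Λ : Set (PersGroup V)} {Y : Set V} {v : V}
    (h : Pz G Λ Y v) {i : ℕ} (hi : i < (LL Λ).length) (hm : v ∈ Zg G (Lget Λ i) Y) :
    gidx G Λ Y v ≤ i := by
  rw [gidx, dif_pos h]; exact Nat.find_min' _ ⟨hi, hm⟩

lemma group_step (G : GameGraph V) (T : Set V) (Λ : Set (PersGroup V))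
    (hΛ : ∀ g ∈ Λ, persWF G g) {Y : Set V} {v : V}
    (ho : G.owner v = 0) (hz : Pz G Λ Y v) :
    ∃ w, G.E v w ∧ w ∈ Zg G (Lget Λ (gidx G Λ Y v)) Y ∪ Y ∧
      (v ∈ srcSet (Lget Λ (gidx G Λ Y v)).2.1 → (v, w) ∈ (Lget Λ (gidx G Λ Y v)).2.1) := by
  obtain ⟨hlen, hmem⟩ := gidx_spec hz
  set g := Lget Λ (gidx G Λ Y v) with hg
  have hgΛ : g ∈ Λ := Lget_mem hlen
  have hp := ((ZProp_Zg G g Y).2 v hmem).2 ho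
  by_cases hs : v ∈ srcSet g.2.1
  · obtain ⟨w, hw1, hw2⟩ := hp.1 hs
    exact ⟨w, ((hΛ g hgΛ).2 _ hw1).1, hw2, fun _ => hw1⟩
  · obtain ⟨w, hw1, hw2⟩ := hp.2 hs
    exact ⟨w, hw1, hw2, fun h => absurd h hs⟩

/-- The positional strategy. -/
noncomputable def st (G : GameGraph V) (T : Set V) (Λ : Set (PersGroup V))
    (hΛ : ∀ g ∈ Λ, persWF G g) (v : V) : V :=
  if ho : G.owner v ≠ 0 then anySucc G v
  else if v ∈ T then anySucc G v
  else if hx : ∃ n, v ∈ Xit G T Λ n then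
    if hc : ∃ w, G.E v w ∧ w ∈ Xit G T Λ (rk G T Λ v - 1) then hc.choose
    else if hz : Pz G Λ (Xit G T Λ (rk G T Λ v - 1)) v then
      (group_step G T Λ hΛ (not_not.mp ho) hz).choose
    else anySucc G v
  else anySucc G v

lemma st_valid (G : GameGraph V) (T : Set V) (Λ : Set (PersGroup V))
    (hΛ : ∀ g ∈ Λ, persWF G g) (v : V) : G.E v (st G T Λ hΛ v) := by
  rw [st]
  split
  · exact anySucc_edge G v
  · split
    · exact anySucc_edge G v
    · split
      · split
        · next hc => exact hc.choose_spec.1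
        · split
          · next ho _ _ _ hz => exact (group_step G T Λ hΛ (not_not.mp ho) hz).choose_spec.1
          · exact anySucc_edge G v
      · exact anySucc_edge G v

lemma st_spec1 {G : GameGraph V} {T : Set V} {Λ : Set (PersGroup V)}
    {hΛ : ∀ g ∈ Λ, persWF G g} {v : V}
    (ho : G.owner v = 0) (hT : v ∉ T) (hx : ∃ n, v ∈ Xit G T Λ n)
    (hc : ∃ w, G.E v w ∧ w ∈ Xit G T Λ (rk G T Λ v - 1)) :
    st G T Λ hΛ v ∈ Xit G T Λ (rk G T Λ v - 1) := by
  rw [st, dif_neg (not_not.mpr ho), if_neg hT, dif_pos hx, dif_pos hc]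
  exact hc.choose_spec.2

lemma st_spec2 {G : GameGraph V} {T : Set V} {Λ : Set (PersGroup V)}
    {hΛ : ∀ g ∈ Λ, persWF G g} {v : V}
    (ho : G.owner v = 0) (hT : v ∉ T) (hx : ∃ n, v ∈ Xit G T Λ n)
    (hc : ¬∃ w, G.E v w ∧ w ∈ Xit G T Λ (rk G T Λ v - 1))
    (hz : Pz G Λ (Xit G T Λ (rk G T Λ v - 1)) v) :
    st G T Λ hΛ v ∈
        Zg G (Lget Λ (gidx G Λ (Xit G T Λ (rk G T Λ v - 1)) v)) (Xit G T Λ (rk G T Λ v - 1))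
          ∪ Xit G T Λ (rk G T Λ v - 1) ∧
      (v ∈ srcSet (Lget Λ (gidx G Λ (Xit G T Λ (rk G T Λ v - 1)) v)).2.1 →
        (v, st G T Λ hΛ v) ∈ (Lget Λ (gidx G Λ (Xit G T Λ (rk G T Λ v - 1)) v)).2.1) := by
  rw [st, dif_neg (not_not.mpr ho), if_neg hT, dif_pos hx, dif_neg hc, dif_pos hz]
  exact (group_step G T Λ hΛ (not_not.mp (not_not.mpr ho)) hz).choose_spec.2

lemma mem_cases {G : GameGraph V} {T : Set V} {Λ : Set (PersGroup V)} {v : V} {k : ℕ}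
    (hv : v ∈ Xit G T Λ (k + 1)) :
    v ∈ T ∨ v ∈ Cpre G (Xit G T Λ k) ∨ Pz G Λ (Xit G T Λ k) v := by
  rw [Xit_succ, Fop] at hv
  rcases hv with (h | h) | h
  · exact Or.inl h
  · exact Or.inr (Or.inl h)
  · right; right
    simp only [Set.mem_iUnion] at h
    obtain ⟨g, hg, hgm⟩ := h
    obtain ⟨i, hi, he⟩ := exists_index hg
    exact ⟨i, hi, by rw [he]; exact hgm⟩

end Stmt16
namespace Stmt16
set_option linter.unusedSectionVars false
open Classical

variable {V : Type} [Fintype V]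

lemma psiPersOne_shift {S : Set V} {C : Set (V × V)} {R : Set V} {ρ : ℕ → V}
    (h : psiPersOne S C R ρ) (m : ℕ) : psiPersOne S C R (fun t => ρ (m + t)) := by
  intro n hn
  have key := h (m + n) (fun m2 hm2 => by
    have e : m2 = m + (m2 - m) := by omega
    have hge : n ≤ m2 - m := by omega
    have := hn (m2 - m) hge
    rw [e]
    exact this)
  obtain ⟨m2, hm2, hR⟩ := key
  refine ⟨m2 - m, by omega, ?_⟩
  have e : m + (m2 - m) = m2 := by omega
  simpa [e] using hR

lemma psiPers_shift {Λ : Set (PersGroup V)} {ρ : ℕ → V}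
    (h : psiPers Λ ρ) (m : ℕ) : psiPers Λ (fun t => ρ (m + t)) :=
  fun g hg => psiPersOne_shift (h g hg) m

lemma Zg_sub_Fop {G : GameGraph V} {T : Set V} {Λ : Set (PersGroup V)} {g : PersGroup V}
    (hg : g ∈ Λ) (Y : Set V) : Zg G g Y ⊆ Fop G T Λ Y := by
  intro v hv
  right
  exact Set.mem_biUnion hg hv

lemma sound (G : GameGraph V) (T : Set V) (Λ : Set (PersGroup V))
    (hΛ : ∀ g ∈ Λ, persWF G g) :
    ∀ k, ∀ ρ : ℕ → V, IsPlay G ρ →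
      (∀ m, G.owner (ρ m) = 0 → ρ (m + 1) = st G T Λ hΛ (ρ m)) →
      ρ 0 ∈ Xit G T Λ k → psiPers Λ ρ → ∃ n, ρ n ∈ T := by
  intro k
  induction k using Nat.strong_induction_on with
  | _ k IH =>
  intro ρ hplay hcomp h0 hψ
  by_cases hT : ∃ n, ρ n ∈ T
  · exact hT
  push_neg at hT
  exfalso
  match k, IH with
  | 0, _ => rw [Xit_zero] at h0; exact h0
  | (j+1), IH =>
  by_cases hlow : ∃ m, ρ m ∈ Xit G T Λ j
  · obtain ⟨m, hm⟩ := hlow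
    obtain ⟨n, hn⟩ := IH j (Nat.lt_succ_self j) (fun t => ρ (m + t))
      (fun t => hplay (m + t)) (fun t ht => hcomp (m + t) ht) hm (psiPers_shift hψ m)
    exact hT (m + n) hn
  push_neg at hlow
  set Y := Xit G T Λ j with hYdef
  -- the key step analysis
  have step : ∀ m, ρ m ∈ Xit G T Λ (j+1) →
      Pz G Λ Y (ρ m) ∧
      ρ (m+1) ∈ Zg G (Lget Λ (gidx G Λ Y (ρ m))) Y ∧
      (ρ m ∈ srcSet (Lget Λ (gidx G Λ Y (ρ m))).2.1 →
        (ρ m, ρ (m+1)) ∈ (Lget Λ (gidx G Λ Y (ρ m))).2.1) := by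
    intro m hm
    have hx : ∃ n, ρ m ∈ Xit G T Λ n := ⟨j+1, hm⟩
    have hrk : rk G T Λ (ρ m) - 1 = j := by
      have h1 := rk_le hm
      have h2 : ¬ rk G T Λ (ρ m) ≤ j := fun hle =>
        hlow m (Xit_mono G T Λ hle (rk_mem hx))
      omega
    by_cases ho : G.owner (ρ m) = 0
    · have hnext := hcomp m ho
      have hc : ¬∃ w, G.E (ρ m) w ∧ w ∈ Xit G T Λ (rk G T Λ (ρ m) - 1) := by
        intro hc
        have := st_spec1 (hΛ := hΛ) ho (hT m) hx hc
        rw [hrk, ← hYdef] at this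
        rw [← hnext] at this
        exact hlow (m+1) this
      have hz : Pz G Λ Y (ρ m) := by
        rcases mem_cases hm with h | h | h
        · exact absurd h (hT m)
        · rcases h with ⟨_, w, hw1, hw2⟩ | ⟨ho', _⟩
          · exact absurd ⟨w, hw1, by rwa [hrk]⟩ hc
          · exact absurd ho ho'
        · exact h
      have hspec := st_spec2 (hΛ := hΛ) ho (hT m) hx hc (by rwa [hrk])
      rw [hrk, ← hYdef, ← hnext] at hspec
      refine ⟨hz, ?_, hspec.2⟩
      rcases hspec.1 with h | h
      · exact h
      · exact absurd h (hlow (m+1))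
    · have hz : Pz G Λ Y (ρ m) := by
        rcases mem_cases hm with h | h | h
        · exact absurd h (hT m)
        · rcases h with ⟨ho', _⟩ | ⟨_, hall⟩
          · exact absurd ho' ho
          · exact absurd (hall _ (hplay m)) (hlow (m+1))
        · exact h
      obtain ⟨hlen, hmem⟩ := gidx_spec hz
      have hcl := ((ZProp_Zg G (Lget Λ (gidx G Λ Y (ρ m))) Y).2 _ hmem).1 ho _ (hplay m)
      refine ⟨hz, ?_, ?_⟩
      · rcases hcl with h | h
        · exact h
        · exact absurd h (hlow (m+1))
      · intro hs
        obtain ⟨w, hw⟩ := hs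
        exact absurd ((hΛ _ (Lget_mem hlen)).2 _ hw).2 ho
  -- invariant: the play stays at level j+1
  have key : ∀ m, ρ m ∈ Xit G T Λ (j+1) := by
    intro m
    induction m with
    | zero => exact h0
    | succ t ih =>
        have hs := (step t ih).2.1
        have hi : gidx G Λ Y (ρ t) < (LL Λ).length := (gidx_spec (step t ih).1).1
        have := Zg_sub_Fop (T := T) (Lget_mem hi) Y hs
        rwa [Xit_succ]
  -- the group index along the play
  set gi : ℕ → ℕ := fun m => gidx G Λ Y (ρ m) with hgi
  have gi_step : ∀ m, gi (m+1) ≤ gi m := by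
    intro m
    have h1 := (step m (key m)).2.1
    have hlen := (gidx_spec (step m (key m)).1).1
    exact gidx_le (step (m+1) (key (m+1))).1 hlen h1
  -- minimal value of gi
  have hPex : ∃ c, ∃ m, gi m = c := ⟨gi 0, 0, rfl⟩
  set c := Nat.find hPex with hc
  obtain ⟨M, hM⟩ : ∃ m, gi m = c := Nat.find_spec hPex
  have hle : ∀ m, c ≤ gi m := fun m => Nat.find_min' hPex ⟨m, rfl⟩
  have hconst : ∀ m, M ≤ m → gi m = c := by
    intro m hm
    have anti : ∀ t, gi (M + t) ≤ gi M := by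
      intro t
      induction t with
      | zero => exact le_refl _
      | succ s ih => exact le_trans (gi_step (M + s)) ih
    have e : m = M + (m - M) := by omega
    have := anti (m - M)
    rw [← e] at this
    have := le_trans this (le_of_eq hM)
    exact le_antisymm this (hle m)
  set g := Lget Λ c with hgdef
  have hglen : c < (LL Λ).length := by
    have hMc : gidx G Λ Y (ρ M) = c := hM
    have := (gidx_spec (step M (key M)).1).1
    rwa [hMc] at this
  have hgΛ : g ∈ Λ := Lget_mem hglen
  have htail : ∀ m, M ≤ m → ρ m ∈ Zg G g Y := by
    intro m hm
    rcases Nat.eq_or_lt_of_le hm with h | h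
    · have hMc : gidx G Λ Y (ρ M) = c := hM
      have := (gidx_spec (step M (key M)).1).2
      rw [hMc] at this
      rwa [← h]
    · have hm1 : M ≤ m - 1 := by omega
      have e : m = (m - 1) + 1 := by omega
      have hcm : gidx G Λ Y (ρ (m-1)) = c := hconst (m-1) hm1
      have := (step (m-1) (key (m-1))).2.1
      rw [hcm] at this
      rwa [e]
  have hSR : Zg G g Y ⊆ g.1 \ g.2.2 := (ZProp_Zg G g Y).1
  obtain ⟨m2, hm2, hR⟩ := hψ g hgΛ M (fun m2 hm2 => by
    refine ⟨(hSR (htail m2 hm2)).1, fun hs => ?_⟩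
    have hcm : gidx G Λ Y (ρ m2) = c := hconst m2 hm2
    have := (step m2 (key m2)).2.2
    rw [hcm] at this
    exact this hs)
  exact (hSR (htail m2 hm2)).2 hR

end Stmt16
namespace Stmt16
set_option linter.unusedSectionVars false
set_option linter.unusedVariables false
open Classical

variable {V : Type} [Fintype V]

lemma T_sub_Xw (G : GameGraph V) (T : Set V) (Λ : Set (PersGroup V)) : T ⊆ Xw G T Λ := by
  intro v hv
  rw [← Xw_fixed]
  exact Or.inl (Or.inl hv)

lemma notX_owner0 {G : GameGraph V} {T : Set V} {Λ : Set (PersGroup V)} {v w : V}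
    (hv : v ∉ Xw G T Λ) (ho : G.owner v = 0) (he : G.E v w) : w ∉ Xw G T Λ := by
  intro hw
  apply hv
  rw [← Xw_fixed]
  exact Or.inl (Or.inr (Or.inl ⟨ho, w, he, hw⟩))

lemma notX_owner1 {G : GameGraph V} {T : Set V} {Λ : Set (PersGroup V)} {v : V}
    (hv : v ∉ Xw G T Λ) (ho : G.owner v ≠ 0) : ∃ w, G.E v w ∧ w ∉ Xw G T Λ := by
  by_contra h
  push_neg at h
  exact hv (by rw [← Xw_fixed]; exact Or.inl (Or.inr (Or.inr ⟨ho, h⟩)))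

/-- Escape levels for a group `g` relative to the winning region. -/
def EscS (G : GameGraph V) (T : Set V) (Λ : Set (PersGroup V)) (g : PersGroup V) :
    ℕ → Set V
  | 0 => ∅
  | (k+1) => {v | v ∉ g.1 \ g.2.2 ∨
      (G.owner v ≠ 0 ∧ ∃ w, G.E v w ∧ w ∉ Xw G T Λ ∧ w ∈ EscS G T Λ g k) ∨
      (G.owner v = 0 ∧
        ((v ∈ srcSet g.2.1 ∧ ∀ w, (v, w) ∈ g.2.1 → w ∉ Xw G T Λ ∧ w ∈ EscS G T Λ g k) ∨
         (v ∉ srcSet g.2.1 ∧ ∀ w, G.E v w → w ∉ Xw G T Λ ∧ w ∈ EscS G T Λ g k)))}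

lemma EscS_mono_step (G : GameGraph V) (T : Set V) (Λ : Set (PersGroup V)) (g : PersGroup V)
    (k : ℕ) : EscS G T Λ g k ⊆ EscS G T Λ g (k + 1) := by
  induction k with
  | zero => intro v hv; exact hv.elim
  | succ j ih =>
      rintro v (h | ⟨ho, w, h1, h2, h3⟩ | ⟨ho, h⟩)
      · exact Or.inl h
      · exact Or.inr (Or.inl ⟨ho, w, h1, h2, ih h3⟩)
      · refine Or.inr (Or.inr ⟨ho, ?_⟩)
        rcases h with ⟨hs, hall⟩ | ⟨hs, hall⟩
        · exact Or.inl ⟨hs, fun w hw => ⟨(hall w hw).1, ih (hall w hw).2⟩⟩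
        · exact Or.inr ⟨hs, fun w hw => ⟨(hall w hw).1, ih (hall w hw).2⟩⟩

lemma EscS_mono (G : GameGraph V) (T : Set V) (Λ : Set (PersGroup V)) (g : PersGroup V)
    {k k' : ℕ} (h : k ≤ k') : EscS G T Λ g k ⊆ EscS G T Λ g k' := by
  induction k' with
  | zero => simp_all
  | succ j ih =>
      rcases Nat.lt_or_ge k (j+1) with h' | h'
      · exact (ih (Nat.lt_succ_iff.mp h')).trans (EscS_mono_step G T Λ g j)
      · have : k = j + 1 := le_antisymm h h'
        simp [this]

noncomputable def erank (G : GameGraph V) (T : Set V) (Λ : Set (PersGroup V))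
    (g : PersGroup V) (u : V) : ℕ :=
  if h : ∃ k, u ∈ EscS G T Λ g k then Nat.find h else 0

noncomputable def Kmax (G : GameGraph V) (T : Set V) (Λ : Set (PersGroup V))
    (g : PersGroup V) : ℕ :=
  Finset.univ.sup fun w => erank G T Λ g w

lemma esc_bound {G : GameGraph V} {T : Set V} {Λ : Set (PersGroup V)} {g : PersGroup V}
    {w : V} (h : ∃ k, w ∈ EscS G T Λ g k) : w ∈ EscS G T Λ g (Kmax G T Λ g) := by
  have h1 : w ∈ EscS G T Λ g (erank G T Λ g w) := by
    rw [erank, dif_pos h]; exact Nat.find_spec h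
  exact EscS_mono G T Λ g (Finset.le_sup (Finset.mem_univ w)) h1

lemma esc_cover {G : GameGraph V} {T : Set V} {Λ : Set (PersGroup V)} {g : PersGroup V}
    (hg : g ∈ Λ) {u : V} (hu : u ∉ Xw G T Λ) : ∃ k, u ∈ EscS G T Λ g k := by
  by_contra hcon
  set K := Kmax G T Λ g with hK
  set D : Set V := (EscS G T Λ g (K+1))ᶜ with hD
  have hDI : ∀ w, w ∉ EscS G T Λ g K → w ∈ D := by
    intro w hw hw1
    exact hw (esc_bound ⟨K+1, hw1⟩)
  have hZ : ZProp G g (Xw G T Λ) D := by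
    constructor
    · intro v hv
      by_contra h
      exact hv (Or.inl h)
    · intro v hv
      constructor
      · intro ho w hw
        by_cases hX : w ∈ Xw G T Λ
        · exact Or.inr hX
        · by_cases hE : w ∈ EscS G T Λ g K
          · exact absurd (Or.inr (Or.inl ⟨ho, w, hw, hX, hE⟩)) hv
          · exact Or.inl (hDI w hE)
      · intro ho
        constructor
        · intro hs
          by_contra hno
          push_neg at hno
          apply hv
          refine Or.inr (Or.inr ⟨ho, Or.inl ⟨hs, fun w hw => ?_⟩⟩)
          have h1 := hno w hw
          rw [Set.mem_union] at h1
          push_neg at h1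
          have hX : w ∉ Xw G T Λ := h1.2
          have hD1 : w ∉ D := h1.1
          have : w ∈ EscS G T Λ g (K+1) := by_contra fun h => hD1 h
          exact ⟨hX, esc_bound ⟨K+1, this⟩⟩
        · intro hs
          by_contra hno
          push_neg at hno
          apply hv
          refine Or.inr (Or.inr ⟨ho, Or.inr ⟨hs, fun w hw => ?_⟩⟩)
          have h1 := hno w hw
          rw [Set.mem_union] at h1
          push_neg at h1
          have : w ∈ EscS G T Λ g (K+1) := by_contra fun h => h1.1 h
          exact ⟨h1.2, esc_bound ⟨K+1, this⟩⟩
  -- so u ∈ D ⊆ Zg ⊆ Fop(Xw) = Xw, contradiction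
  push_neg at hcon
  have huD : u ∈ D := fun h => hcon (K+1) h
  have : u ∈ Zg G g (Xw G T Λ) := ⟨D, hZ, huD⟩
  have : u ∈ Xw G T Λ := by
    rw [← Xw_fixed]
    exact Zg_sub_Fop hg (Xw G T Λ) this
  exact hu this

lemma erank_lt {G : GameGraph V} {T : Set V} {Λ : Set (PersGroup V)} {g : PersGroup V}
    {u w : V} {k : ℕ}
    (hk' : erank G T Λ g u = k + 1) (hw : w ∈ EscS G T Λ g k) :
    erank G T Λ g w < erank G T Λ g u := by
  rw [hk', erank, dif_pos ⟨k, hw⟩]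
  exact Nat.lt_succ_of_le (Nat.find_min' _ hw)

/-- The escape-step lemma: from an unwon vertex inside `S \ R`, Player 1 can
force (and every relevant Player-0 choice entails) a decrease of escape rank. -/
lemma esc_step {G : GameGraph V} {T : Set V} {Λ : Set (PersGroup V)} {g : PersGroup V}
    (hg : g ∈ Λ) {u : V} (hu : u ∉ Xw G T Λ) (hSR : u ∈ g.1 \ g.2.2) :
    (G.owner u ≠ 0 → ∃ w, G.E u w ∧ w ∉ Xw G T Λ ∧ erank G T Λ g w < erank G T Λ g u) ∧
    (G.owner u = 0 → ∀ w,
      ((u ∈ srcSet g.2.1 ∧ (u, w) ∈ g.2.1) ∨ (u ∉ srcSet g.2.1 ∧ G.E u w)) →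
      w ∉ Xw G T Λ ∧ erank G T Λ g w < erank G T Λ g u) := by
  have hex := esc_cover hg hu
  have hmem : u ∈ EscS G T Λ g (erank G T Λ g u) := by
    rw [erank, dif_pos hex]; exact Nat.find_spec hex
  have hpos : 1 ≤ erank G T Λ g u := by
    rcases Nat.eq_zero_or_pos (erank G T Λ g u) with h | h
    · rw [h] at hmem; exact hmem.elim
    · exact h
  obtain ⟨k, hke⟩ : ∃ k, erank G T Λ g u = k + 1 := ⟨erank G T Λ g u - 1, by omega⟩
  rw [hke] at hmem
  rcases hmem with h | ⟨ho, w, hw1, hw2, hw3⟩ | ⟨ho, h⟩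
  · exact absurd hSR h
  · exact ⟨fun _ => ⟨w, hw1, hw2, erank_lt hke hw3⟩, fun h0 => absurd h0 ho⟩
  · refine ⟨fun h1 => absurd ho h1, fun _ w hw => ?_⟩
    rcases h with ⟨hs, hall⟩ | ⟨hs, hall⟩
    · rcases hw with ⟨_, hC⟩ | ⟨hns, _⟩
      · obtain ⟨hX, hE⟩ := hall w hC
        exact ⟨hX, erank_lt hke hE⟩
      · exact absurd hs hns
    · rcases hw with ⟨hsrc, _⟩ | ⟨_, hEdge⟩
      · exact absurd hsrc hs
      · obtain ⟨hX, hE⟩ := hall w hEdge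
        exact ⟨hX, erank_lt hke hE⟩

end Stmt16
namespace Stmt16
set_option linter.unusedSectionVars false
set_option linter.unusedVariables false
open Classical

variable {V : Type} [Fintype V]

noncomputable def curG (Λ : Set (PersGroup V)) (i : ℕ) : PersGroup V := Lget Λ (i % (LL Λ).length)

lemma curG_mem {Λ : Set (PersGroup V)} (h : 0 < (LL Λ).length) (i : ℕ) : curG Λ i ∈ Λ :=
  Lget_mem (Nat.mod_lt _ h)

noncomputable def p1pick (G : GameGraph V) (T : Set V) (Λ : Set (PersGroup V))
    (i : ℕ) (u : V) : V :=
  if h : ∃ w, G.E u w ∧ w ∉ Xw G T Λ ∧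
      (0 < (LL Λ).length → u ∈ (curG Λ i).1 \ (curG Λ i).2.2 →
        erank G T Λ (curG Λ i) w < erank G T Λ (curG Λ i) u)
  then h.choose else anySucc G u

lemma p1pick_spec {G : GameGraph V} {T : Set V} {Λ : Set (PersGroup V)} {i : ℕ} {u : V}
    (hu : u ∉ Xw G T Λ) (ho : G.owner u ≠ 0) :
    G.E u (p1pick G T Λ i u) ∧ p1pick G T Λ i u ∉ Xw G T Λ ∧
    (0 < (LL Λ).length → u ∈ (curG Λ i).1 \ (curG Λ i).2.2 →
      erank G T Λ (curG Λ i) (p1pick G T Λ i u) < erank G T Λ (curG Λ i) u) := by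
  have hex : ∃ w, G.E u w ∧ w ∉ Xw G T Λ ∧
      (0 < (LL Λ).length → u ∈ (curG Λ i).1 \ (curG Λ i).2.2 →
        erank G T Λ (curG Λ i) w < erank G T Λ (curG Λ i) u) := by
    by_cases hc : 0 < (LL Λ).length ∧ u ∈ (curG Λ i).1 \ (curG Λ i).2.2
    · obtain ⟨w, h1, h2, h3⟩ := (esc_step (curG_mem hc.1 i) hu hc.2).1 ho
      exact ⟨w, h1, h2, fun _ _ => h3⟩
    · obtain ⟨w, h1, h2⟩ := notX_owner1 hu ho
      exact ⟨w, h1, h2, fun hl hm => absurd ⟨hl, hm⟩ hc⟩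
  rw [p1pick, dif_pos hex]
  exact hex.choose_spec

/-- Progress for the current group: its assumption is locally broken or its
target set is visited. -/
def progp (G : GameGraph V) (Λ : Set (PersGroup V)) (u w : V) (i : ℕ) : Prop :=
  0 < (LL Λ).length ∧ (u ∉ (curG Λ i).1 ∨ u ∈ (curG Λ i).2.2 ∨
    (u ∈ srcSet (curG Λ i).2.1 ∧ (u, w) ∉ (curG Λ i).2.1))

noncomputable def runStep (G : GameGraph V) (T : Set V) (Λ : Set (PersGroup V))
    (σ' : Strategy V) (q : List V × V × ℕ) : List V × V × ℕ :=
  (q.1 ++ [q.2.1],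
   if G.owner q.2.1 = 0 then σ' q.1 q.2.1 else p1pick G T Λ q.2.2 q.2.1,
   if progp G Λ q.2.1
        (if G.owner q.2.1 = 0 then σ' q.1 q.2.1 else p1pick G T Λ q.2.2 q.2.1) q.2.2
   then q.2.2 + 1 else q.2.2)

noncomputable def run (G : GameGraph V) (T : Set V) (Λ : Set (PersGroup V))
    (σ' : Strategy V) (v : V) : ℕ → List V × V × ℕ
  | 0 => ([], v, 0)
  | (m+1) => runStep G T Λ σ' (run G T Λ σ' v m)

noncomputable def rhoF (G : GameGraph V) (T : Set V) (Λ : Set (PersGroup V))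
    (σ' : Strategy V) (v : V) (m : ℕ) : V := (run G T Λ σ' v m).2.1

noncomputable def iiF (G : GameGraph V) (T : Set V) (Λ : Set (PersGroup V))
    (σ' : Strategy V) (v : V) (m : ℕ) : ℕ := (run G T Λ σ' v m).2.2

lemma complete (G : GameGraph V) (T : Set V) (Λ : Set (PersGroup V)) {v : V}
    (hwin : v ∈ WinRegion G 0 {ρ | psiPers Λ ρ → ∃ n, ρ n ∈ T}) : v ∈ Xw G T Λ := by
  by_contra hv
  obtain ⟨σ', hval, hwins⟩ := hwin
  have hρ0 : rhoF G T Λ σ' v 0 = v := rfl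
  have hi0 : iiF G T Λ σ' v 0 = 0 := rfl
  have hρs : ∀ m, rhoF G T Λ σ' v (m+1) =
      if G.owner (rhoF G T Λ σ' v m) = 0
      then σ' (run G T Λ σ' v m).1 (rhoF G T Λ σ' v m)
      else p1pick G T Λ (iiF G T Λ σ' v m) (rhoF G T Λ σ' v m) := fun m => rfl
  have his : ∀ m, iiF G T Λ σ' v (m+1) =
      if progp G Λ (rhoF G T Λ σ' v m) (rhoF G T Λ σ' v (m+1)) (iiF G T Λ σ' v m)
      then iiF G T Λ σ' v m + 1 else iiF G T Λ σ' v m := fun m => rfl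
  -- history bookkeeping
  have hhist : ∀ m, (run G T Λ σ' v m).1 =
      List.ofFn (fun j : Fin m => rhoF G T Λ σ' v j.val) := by
    intro m
    induction m with
    | zero => rfl
    | succ t ih =>
        have : (run G T Λ σ' v (t+1)).1 = (run G T Λ σ' v t).1 ++ [rhoF G T Λ σ' v t] := rfl
        rw [this, ih, List.ofFn_succ']
        simp [List.concat_eq_append]
  -- the play never enters the winning region
  have hnX : ∀ m, rhoF G T Λ σ' v m ∉ Xw G T Λ := by
    intro m
    induction m with
    | zero => exact hv
    | succ t ih =>
        by_cases ho : G.owner (rhoF G T Λ σ' v t) = 0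
        · have he : rhoF G T Λ σ' v (t+1) = σ' (run G T Λ σ' v t).1 (rhoF G T Λ σ' v t) := by
            rw [hρs t, if_pos ho]
          rw [he]
          exact notX_owner0 ih ho (hval _ _ ho)
        · have he : rhoF G T Λ σ' v (t+1) =
              p1pick G T Λ (iiF G T Λ σ' v t) (rhoF G T Λ σ' v t) := by
            rw [hρs t, if_neg ho]
          rw [he]
          exact (p1pick_spec ih ho).2.1
  -- it is a play
  have hplay : IsPlay G (rhoF G T Λ σ' v) := by
    intro m
    by_cases ho : G.owner (rhoF G T Λ σ' v m) = 0
    · rw [hρs m, if_pos ho]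
      exact hval _ _ ho
    · rw [hρs m, if_neg ho]
      exact (p1pick_spec (hnX m) ho).1
  -- it is compliant with σ'
  have hcomp : Compliant G 0 σ' (rhoF G T Λ σ' v) := by
    intro m ho
    rw [hρs m, if_pos ho, hhist m]
  -- index dynamics
  have hii : ∀ m, iiF G T Λ σ' v (m+1) = iiF G T Λ σ' v m + 1 ∨
      iiF G T Λ σ' v (m+1) = iiF G T Λ σ' v m := by
    intro m
    rw [his m]
    split
    · exact Or.inl rfl
    · exact Or.inr rfl
  have hiile : ∀ m, iiF G T Λ σ' v m ≤ m := by
    intro m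
    induction m with
    | zero => simp [hi0]
    | succ t ih => rcases hii t with h | h <;> omega
  have hprog_of_inc : ∀ m, iiF G T Λ σ' v (m+1) = iiF G T Λ σ' v m + 1 →
      progp G Λ (rhoF G T Λ σ' v m) (rhoF G T Λ σ' v (m+1)) (iiF G T Λ σ' v m) := by
    intro m h
    rw [his m] at h
    by_contra hp
    rw [if_neg hp] at h
    omega
  have hinc_of_prog : ∀ m,
      progp G Λ (rhoF G T Λ σ' v m) (rhoF G T Λ σ' v (m+1)) (iiF G T Λ σ' v m) →
      iiF G T Λ σ' v (m+1) = iiF G T Λ σ' v m + 1 := by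
    intro m h
    rw [his m, if_pos h]
  -- the index increases unboundedly often
  have hub : 0 < (LL Λ).length → ∀ M, ∃ m, M ≤ m ∧
      iiF G T Λ σ' v (m+1) = iiF G T Λ σ' v m + 1 := by
    intro hl M
    by_contra hcon
    push_neg at hcon
    have hconst : ∀ t, iiF G T Λ σ' v (M + t) = iiF G T Λ σ' v M := by
      intro t
      induction t with
      | zero => rfl
      | succ s ih =>
          rcases hii (M + s) with h | h
          · exact absurd h (hcon (M + s) (by omega))
          · rw [show M + (s+1) = (M+s) + 1 from rfl, h, ih]
    set g := curG Λ (iiF G T Λ σ' v M) with hg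
    have hgΛ : g ∈ Λ := curG_mem hl _
    have hdec : ∀ t, erank G T Λ g (rhoF G T Λ σ' v (M+t+1)) <
        erank G T Λ g (rhoF G T Λ σ' v (M+t)) := by
      intro t
      have hnp : ¬ progp G Λ (rhoF G T Λ σ' v (M+t)) (rhoF G T Λ σ' v (M+t+1))
          (iiF G T Λ σ' v (M+t)) := by
        intro hp
        have h1 := hinc_of_prog _ hp
        have h2 := hconst t
        have h3 := hconst (t+1)
        rw [show M + (t+1) = (M+t) + 1 from rfl] at h3
        omega
      rw [progp, hconst t, ← hg] at hnp
      push_neg at hnp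
      obtain ⟨hS, hR, hCimp⟩ := hnp hl
      have hSR : rhoF G T Λ σ' v (M+t) ∈ g.1 \ g.2.2 := ⟨hS, hR⟩
      by_cases ho : G.owner (rhoF G T Λ σ' v (M+t)) = 0
      · have he : rhoF G T Λ σ' v (M+t+1) =
            σ' (run G T Λ σ' v (M+t)).1 (rhoF G T Λ σ' v (M+t)) := by
          rw [hρs (M+t), if_pos ho]
        by_cases hs : rhoF G T Λ σ' v (M+t) ∈ srcSet g.2.1
        · have hC : (rhoF G T Λ σ' v (M+t), rhoF G T Λ σ' v (M+t+1)) ∈ g.2.1 := hCimp hs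
          exact ((esc_step hgΛ (hnX (M+t)) hSR).2 ho _ (Or.inl ⟨hs, hC⟩)).2
        · have hEdge : G.E (rhoF G T Λ σ' v (M+t)) (rhoF G T Λ σ' v (M+t+1)) := hplay (M+t)
          exact ((esc_step hgΛ (hnX (M+t)) hSR).2 ho _ (Or.inr ⟨hs, hEdge⟩)).2
      · have he : rhoF G T Λ σ' v (M+t+1) =
            p1pick G T Λ (iiF G T Λ σ' v (M+t)) (rhoF G T Λ σ' v (M+t)) := by
          rw [hρs (M+t), if_neg ho]
        have hcg : curG Λ (iiF G T Λ σ' v (M+t)) = g := by rw [hconst t, ← hg]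
        have hsp := (p1pick_spec (i := iiF G T Λ σ' v (M+t)) (hnX (M+t)) ho).2.2
        rw [hcg] at hsp
        rw [he]
        exact hsp hl hSR
    have hsum : ∀ t, erank G T Λ g (rhoF G T Λ σ' v (M+t)) + t ≤
        erank G T Λ g (rhoF G T Λ σ' v M) := by
      intro t
      induction t with
      | zero => simp
      | succ s ih =>
          have := hdec s
          have e : M + (s+1) = (M+s)+1 := rfl
          rw [e]
          omega
    have := hsum (erank G T Λ g (rhoF G T Λ σ' v M) + 1)
    omega
  -- from any point, the index eventually takes the next value
  have hnext : 0 < (LL Λ).length → ∀ m0, ∃ m, m0 ≤ m ∧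
      iiF G T Λ σ' v m = iiF G T Λ σ' v m0 ∧
      iiF G T Λ σ' v (m+1) = iiF G T Λ σ' v m0 + 1 := by
    intro hl m0
    obtain ⟨m1, hm1, hinc⟩ := hub hl m0
    have hexist : ∃ t, iiF G T Λ σ' v (m0 + t + 1) = iiF G T Λ σ' v (m0 + t) + 1 := by
      refine ⟨m1 - m0, ?_⟩
      have e : m0 + (m1 - m0) = m1 := by omega
      rw [e]
      exact hinc
    set t0 := Nat.find hexist with ht0
    have hstep := Nat.find_spec hexist
    have hmin : ∀ s, s < t0 → iiF G T Λ σ' v (m0+s+1) = iiF G T Λ σ' v (m0+s) := by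
      intro s hs
      exact (hii (m0+s)).resolve_left (Nat.find_min hexist hs)
    have hconst0 : ∀ s, s ≤ t0 → iiF G T Λ σ' v (m0+s) = iiF G T Λ σ' v m0 := by
      intro s hs
      induction s with
      | zero => rfl
      | succ r ih =>
          have h1 := hmin r (by omega)
          rw [show m0 + (r+1) = (m0+r)+1 from rfl, h1, ih (by omega)]
    refine ⟨m0 + t0, by omega, hconst0 t0 le_rfl, ?_⟩
    rw [hstep, hconst0 t0 le_rfl]
  -- the index hits every value
  have hhit : 0 < (LL Λ).length → ∀ val, ∃ m, iiF G T Λ σ' v m = val ∧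
      iiF G T Λ σ' v (m+1) = val + 1 := by
    intro hl val
    induction val with
    | zero =>
        obtain ⟨m, h1, h2, h3⟩ := hnext hl 0
        rw [hi0] at h2 h3
        exact ⟨m, h2, h3⟩
    | succ val ih =>
        obtain ⟨m, h1, h2⟩ := ih
        obtain ⟨m', hge, h2', h3'⟩ := hnext hl (m+1)
        rw [h2] at h2' h3'
        exact ⟨m', h2', h3'⟩
  -- the constructed play satisfies all the live-group assumptions
  have hψ : psiPers Λ (rhoF G T Λ σ' v) := by
    intro g hgΛ n hyp
    have hl : 0 < (LL Λ).length :=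
      List.length_pos_iff.mpr (List.ne_nil_of_mem (mem_LL.mpr hgΛ))
    obtain ⟨j, hj, hje⟩ := exists_index hgΛ
    obtain ⟨m, h1, h2⟩ := hhit hl ((LL Λ).length * (n+1) + j)
    have hvn : n + 1 ≤ (LL Λ).length * (n+1) := Nat.le_mul_of_pos_left _ hl
    have hmn : n ≤ m := by
      have := hiile m
      omega
    have hprog := hprog_of_inc m (by rw [h1, h2])
    have hcg : curG Λ (iiF G T Λ σ' v m) = g := by
      rw [h1, curG]
      have e : ((LL Λ).length * (n+1) + j) % (LL Λ).length = j := by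
        rw [Nat.mul_add_mod]
        exact Nat.mod_eq_of_lt hj
      rw [e, hje]
    rw [progp, hcg] at hprog
    obtain ⟨-, hd⟩ := hprog
    obtain ⟨hS, hC⟩ := hyp m hmn
    rcases hd with h | h | ⟨hs, hnc⟩
    · exact absurd hS h
    · exact ⟨m, hmn, h⟩
    · exact absurd (hC hs) hnc
  -- conclude
  obtain ⟨n, hn⟩ := hwins (rhoF G T Λ σ' v) hplay hcomp hρ0 hψ
  exact hnX n (T_sub_Xw G T Λ hn)

end Stmt16
/-- In every reachability game augmented with persistent live
groups `𝔊 = (G, ◇T, ψ_pers(Λ))`, Player 0 has a single positional strategy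
that is winning from every vertex of her winning region in `𝔊`. -/
theorem stmt16 (V : Type) [Fintype V] (G : GameGraph V)
    (T : Set V) (Λ : Set (PersGroup V)) (hΛ : ∀ g ∈ Λ, persWF G g) :
    ∃ σ : Strategy V, Positional σ ∧
      ∀ v ∈ WinRegion G 0 {ρ | psiPers Λ ρ → ∃ n, ρ n ∈ T},
        WinsFrom G 0 {ρ | psiPers Λ ρ → ∃ n, ρ n ∈ T} σ v := by
  refine ⟨fun _ v => Stmt16.st G T Λ hΛ v, fun h h' v => rfl, ?_⟩
  intro v hv
  constructor
  · intro h u ho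
    exact Stmt16.st_valid G T Λ hΛ u
  · intro ρ hplay hcomp h0
    intro hψ
    have hvX : v ∈ Stmt16.Xw G T Λ := Stmt16.complete G T Λ hv
    have hcomp' : ∀ m, G.owner (ρ m) = 0 → ρ (m + 1) = Stmt16.st G T Λ hΛ (ρ m) :=
      fun m hm => hcomp m hm
    have h0' : ρ 0 ∈ Stmt16.Xit G T Λ (Stmt16.exists_fix G T Λ).choose := by
      rw [h0]
      exact hvX
    exact Stmt16.sound G T Λ hΛ _ ρ hplay hcomp' h0' hψ
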